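/- arXiv:2410.10064 — 2 statements merged into one kernel-verified Lean document; each statement's English description precedes it below -/
import Mathlib

section
/- For α, β ∈ k, the polynomial φ_{α,β}(X) has a multiple root in k if and only if D(α,β) = 0. -/
noncomputable section

open Polynomial

/-- The polynomial
`φ_{α,β}(X) = (X - β) ∏_{k=1}^{(N-1)/2} (X² - β(q^{2k} + q^{-2k})X + β² + ((q^{2k} - q^{-2k})²/(1-q²))α)`. -/
def phiPoly {k : Type*} [Field k] (q : k) (N : ℕ) (α β : k) : Polynomial k :=
  (X - C β) *
    ∏ j ∈ Finset.Icc 1 ((N - 1) / 2),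
      (X ^ 2 - C (β * (q ^ (2 * (j : ℤ)) + q ^ (-(2 * (j : ℤ))))) * X
        + C (β ^ 2 + (q ^ (2 * (j : ℤ)) - q ^ (-(2 * (j : ℤ)))) ^ 2 / (1 - q ^ 2) * α))

/-- The scalar `D(α,β) = ∏_{k=0}^{N-1} (β² - ((q^k + q^{-k})²/(1-q²))·α)`. -/
def Dscalar {k : Type*} [Field k] (q : k) (N : ℕ) (α β : k) : k :=
  ∏ j ∈ Finset.range N, (β ^ 2 - (q ^ (j : ℤ) + q ^ (-(j : ℤ))) ^ 2 / (1 - q ^ 2) * α)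

end

/-!
Write `β = u + v` and `α / (1 - q²) = u v`, which is possible because `k` is algebraically
closed, and put `w = q²`, again a primitive `N`-th root of unity as `N` is odd. Each quadratic
factor of `φ` then splits, giving `φ = ∏_{t < N} (X - (wᵗ u + w⁻ᵗ v))`, while each factor of
`D` becomes `(u - wʲ v)(u - w⁻ʲ v)`, so `D = (uᴺ - vᴺ)²`. Two of the roots of `φ`, for `s ≠ t`,
coincide iff `w^(s+t) u = v`; since `s + t` with `s ≠ t` reaches every residue mod `N`, this
happens for some pair iff `uᴺ = vᴺ`.
-/

open Polynomial Finset

theorem IsPrimitiveRoot.prod_range_sub_pow_mul {K : Type*} [Field K] {ζ : K} {n : ℕ}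
    (hζ : IsPrimitiveRoot ζ n) (hn : 0 < n) (a b : K) :
    ∏ i ∈ range n, (a - ζ ^ i * b) = a ^ n - b ^ n := by
  simpa [eval_prod] using (congrArg (eval a) (X_pow_sub_C_eq_prod hζ hn rfl)).symm

theorem exists_sq_dvd_prod_X_sub_C_iff {R ι : Type*} [CommRing R] [IsDomain R]
    (s : Finset ι) (r : ι → R) :
    (∃ x, (X - C x) ^ 2 ∣ ∏ i ∈ s, (X - C (r i))) ↔ ¬ Set.InjOn r s := by
  classical
  set p := ∏ i ∈ s, (X - C (r i))
  have hroots : p.roots = s.val.map r := by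
    simpa [Multiset.map_map] using roots_multiset_prod_X_sub_C (s.val.map r)
  have hp : p ≠ 0 := (monic_prod_of_monic _ _ fun i _ => monic_X_sub_C (r i)).ne_zero
  rw [← s.nodup_map_iff_injOn, Multiset.nodup_iff_count_le_one, ← hroots]
  simp_rw [count_roots, ← le_rootMultiplicity_iff hp]
  push Not
  rfl

theorem Finset.prod_range_two_mul_add_one {M : Type*} [CommMonoid M] (f : ℕ → M) (m : ℕ) :
    ∏ t ∈ range (2 * m + 1), f t = f 0 * ∏ j ∈ Icc 1 m, (f j * f (2 * m + 1 - j)) := by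
  have hIcc (g : ℕ → M) : ∏ j ∈ Icc 1 m, g j = ∏ i ∈ range m, g (i + 1) := by
    rw [← Ico_add_one_right_eq_Icc, prod_Ico_eq_prod_range]
    simp [add_comm]
  have hreflect : ∏ i ∈ range m, f (m + i + 1) = ∏ i ∈ range m, f (2 * m + 1 - (i + 1)) := by
    rw [← prod_range_reflect]
    refine prod_congr rfl fun i hi => ?_
    rw [mem_range] at hi
    congr 1
    omega
  rw [hIcc, prod_mul_distrib, ← hreflect, prod_range_succ', two_mul, prod_range_add, mul_comm]

theorem exists_add_eq_and_mul_eq {K : Type*} [Field K] [IsAlgClosed K] (b c : K) :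
    ∃ u v, u + v = b ∧ u * v = c := by
  obtain ⟨u, hu⟩ := IsAlgClosed.exists_root (C 1 * X ^ 2 + C (-b) * X + C c)
    (by rw [degree_quadratic one_ne_zero]; decide)
  refine ⟨u, b - u, by ring, ?_⟩
  simp only [IsRoot, eval_add, eval_mul, eval_C, eval_pow, eval_X] at hu
  linear_combination -hu

section

variable {K : Type*} [Field K]

theorem X_sq_sub_C_mul_X_add_C_eq_mul {z : K} (hz : z ≠ 0) (u v : K) :
    X ^ 2 - C ((u + v) * (z + z⁻¹)) * X + C ((u + v) ^ 2 + (z - z⁻¹) ^ 2 * (u * v)) =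
      (X - C (z * u + z⁻¹ * v)) * (X - C (z⁻¹ * u + z * v)) := by
  have hprod :
      (u + v) ^ 2 + (z - z⁻¹) ^ 2 * (u * v) = (z * u + z⁻¹ * v) * (z⁻¹ * u + z * v) := by
    field_simp
    ring
  rw [hprod]
  simp only [map_add, map_mul]
  ring

def phiRoot (w u v : K) (t : ℕ) : K := w ^ t * u + (w ^ t)⁻¹ * v

theorem phiRoot_eq_phiRoot_iff {w : K} (hw : w ≠ 0) (u v : K) (s t : ℕ) :
    phiRoot w u v s = phiRoot w u v t ↔ w ^ s = w ^ t ∨ w ^ (s + t) * u = v := by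
  have hs : w ^ s ≠ 0 := pow_ne_zero s hw
  have ht : w ^ t ≠ 0 := pow_ne_zero t hw
  have key : phiRoot w u v s - phiRoot w u v t =
      (w ^ s - w ^ t) * (w ^ (s + t) * u - v) / w ^ (s + t) := by
    unfold phiRoot
    field_simp
    ring
  rw [← sub_eq_zero, key, div_eq_zero_iff, mul_eq_zero, sub_eq_zero, sub_eq_zero,
    or_iff_left (pow_ne_zero _ hw)]

theorem injOn_phiRoot_iff {w : K} {N : ℕ} (hw : IsPrimitiveRoot w N) (hN : 2 < N) (u v : K) :
    Set.InjOn (phiRoot w u v) (range N) ↔ u ^ N ≠ v ^ N := by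
  have hw0 : w ≠ 0 := hw.ne_zero (by omega)
  constructor
  · intro hinj hpow
    obtain ⟨s, hs, t, ht, hst, heq⟩ : ∃ s < N, ∃ t < N, s ≠ t ∧ w ^ (s + t) * u = v := by
      by_cases hu : u = 0
      · rw [hu, zero_pow (by omega)] at hpow
        have hv : v = 0 := pow_eq_zero_iff (by omega) |>.mp hpow.symm
        exact ⟨0, by omega, 1, by omega, by omega, by rw [hu, hv, mul_zero]⟩
      have : NeZero N := ⟨by omega⟩
      obtain ⟨i, hi, hwi⟩ := hw.eq_pow_of_pow_eq_one (ξ := v / u)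
        (by rw [div_pow, ← hpow, div_self (pow_ne_zero _ hu)])
      rw [eq_div_iff hu] at hwi
      -- `s + t = i` with `s ≠ t`; for `i = 0` use `1 + (N - 1)`, which needs `N ≠ 2`
      rcases Nat.eq_zero_or_pos i with rfl | hi0
      · refine ⟨1, by omega, N - 1, by omega, by omega, ?_⟩
        rw [Nat.add_sub_cancel' (by omega), hw.pow_eq_one, ← hwi, pow_zero]
      · exact ⟨0, by omega, i, hi, by omega, by rwa [zero_add]⟩
    exact hst (hinj (by simpa using hs) (by simpa using ht)
      ((phiRoot_eq_phiRoot_iff hw0 u v s t).2 (Or.inr heq)))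
  · intro hpow s hs t ht heq
    rcases (phiRoot_eq_phiRoot_iff hw0 u v s t).1 heq with h | h
    · exact hw.pow_inj (by simpa using hs) (by simpa using ht) h
    · refine absurd ?_ hpow
      rw [← h, mul_pow, pow_right_comm, hw.pow_eq_one, one_pow, one_mul]

theorem phiPoly_eq_prod_phiRoot {q : K} {N : ℕ} (hq : q ^ N = 1) (hN : Odd N) {α β u v : K}
    (huv : u + v = β) (hc : u * v = α / (1 - q ^ 2)) :
    phiPoly q N α β = ∏ t ∈ range N, (X - C (phiRoot (q ^ 2) u v t)) := by
  obtain ⟨m, rfl⟩ := hN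
  have hq0 : q ≠ 0 := by
    rintro rfl
    simp at hq
  have hfactor : ∀ j ∈ Icc 1 m,
      X ^ 2 - C (β * (q ^ (2 * (j : ℤ)) + q ^ (-(2 * (j : ℤ))))) * X
        + C (β ^ 2 + (q ^ (2 * (j : ℤ)) - q ^ (-(2 * (j : ℤ)))) ^ 2 / (1 - q ^ 2) * α) =
      (X - C (phiRoot (q ^ 2) u v j)) * (X - C (phiRoot (q ^ 2) u v (2 * m + 1 - j))) := by
    intro j hj
    rw [mem_Icc] at hj
    have hz : q ^ (2 * (j : ℤ)) = (q ^ 2) ^ j := by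
      rw [zpow_mul, zpow_ofNat, zpow_natCast]
    have hreflect : (q ^ 2) ^ (2 * m + 1 - j) = ((q ^ 2) ^ j)⁻¹ :=
      eq_inv_of_mul_eq_one_left <| by
        rw [← pow_add, Nat.sub_add_cancel (by omega), pow_right_comm, hq, one_pow]
    rw [zpow_neg, hz, div_mul_eq_mul_div, mul_div_assoc, ← hc, ← huv,
      X_sq_sub_C_mul_X_add_C_eq_mul (pow_ne_zero j (pow_ne_zero 2 hq0)), phiRoot, phiRoot,
      hreflect, inv_inv]
  rw [phiPoly, show (2 * m + 1 - 1) / 2 = m by omega, prod_congr rfl hfactor,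
    prod_range_two_mul_add_one, phiRoot, pow_zero, inv_one, one_mul, one_mul, huv]

theorem Dscalar_eq_sq_sub_pow {q : K} {N : ℕ} (hw : IsPrimitiveRoot (q ^ 2) N) (hN : 0 < N)
    {α β u v : K} (huv : u + v = β) (hc : u * v = α / (1 - q ^ 2)) :
    Dscalar q N α β = (u ^ N - v ^ N) ^ 2 := by
  have hq0 : q ≠ 0 := fun h => hw.ne_zero hN.ne' (by rw [h, zero_pow two_ne_zero])
  have hfactor : ∀ j ∈ range N,
      β ^ 2 - (q ^ (j : ℤ) + q ^ (-(j : ℤ))) ^ 2 / (1 - q ^ 2) * α =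
        (u - (q ^ 2) ^ j * v) * (u - (q ^ 2)⁻¹ ^ j * v) := by
    intro j _
    rw [zpow_neg, zpow_natCast, div_mul_eq_mul_div, mul_div_assoc, ← hc, ← huv, inv_pow]
    field_simp
    ring
  rw [Dscalar, prod_congr rfl hfactor, prod_mul_distrib, hw.prod_range_sub_pow_mul hN,
    hw.inv.prod_range_sub_pow_mul hN, sq]

end

theorem phi_has_multiple_root_iff_general
    {k : Type*} [Field k] [IsAlgClosed k] {q : k} {N : ℕ}
    (hN : Odd N) (hN1 : 1 < N) (hq : IsPrimitiveRoot q N) (α β : k) :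
    (∃ x : k, (X - C x) ^ 2 ∣ phiPoly q N α β) ↔ Dscalar q N α β = 0 := by
  obtain ⟨u, v, huv, hc⟩ := exists_add_eq_and_mul_eq β (α / (1 - q ^ 2))
  have hw : IsPrimitiveRoot (q ^ 2) N := hq.pow_of_coprime 2 (Nat.coprime_two_left.mpr hN)
  have hN2 : 2 < N := by
    obtain ⟨m, rfl⟩ := hN
    omega
  rw [phiPoly_eq_prod_phiRoot hq.pow_eq_one hN huv hc, exists_sq_dvd_prod_X_sub_C_iff,
    injOn_phiRoot_iff hw hN2, not_not, Dscalar_eq_sq_sub_pow hw hN.pos huv hc, sq_eq_zero_iff,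
    sub_eq_zero]

/-- **Theorem.** For `α, β ∈ k`, the polynomial `φ_{α,β}(X)` has a multiple root in `k`
if and only if `D(α,β) = 0`. -/
theorem phi_has_multiple_root_iff
    {k : Type*} [Field k] [IsAlgClosed k] [CharZero k] {q : k} {N : ℕ}
    (hN : Odd N) (hN1 : 1 < N) (hq : IsPrimitiveRoot q N) (α β : k) :
    (∃ x : k, (X - C x) ^ 2 ∣ phiPoly q N α β) ↔ Dscalar q N α β = 0 :=
  phi_has_multiple_root_iff_general hN hN1 hq α β
end

section
/- Let A be a right coideal subalgebra of U(D) and let y be a nonzero element of A with leading coefficient c ∈ kΓ and degree m = (m₁, …, m_θ). Then: (a) c belongs to A; and (b) for every index k with m_k > 0, there exist scalars β_{k+1}, …, β_θ, α ∈ k such that the element x_k + Σ_{ℓ=k+1}^{θ} β_ℓ u_{g_k} u_{g_ℓ}^{−1} x_ℓ + α u_{g_k} belongs to A. -/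
open scoped TensorProduct

noncomputable section

/-- A subalgebra `A` of a Hopf algebra (or bialgebra) `H` is a *right coideal subalgebra*
if `Δ(A) ⊆ A ⊗ H`. -/
def IsRightCoidealSubalgebra (k : Type*) {H : Type*} [CommSemiring k] [Semiring H]
    [Algebra k H] [CoalgebraStruct k H] (A : Subalgebra k H) : Prop :=
  ∀ a ∈ A, Coalgebra.comul (R := k) a ∈
    LinearMap.range (TensorProduct.map (Subalgebra.toSubmodule A).subtype
      (LinearMap.id (R := k) (M := H)))

/-- A datum `D = (Γ, (g_i), (χ_i), (λ_{ij}), (μ_i))` for the lifting of a finite quantum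
linear space. -/
structure LiftingDatum (k : Type*) [Field k] (Γ : Type*) [CommGroup Γ] [Fintype Γ]
    (θ : ℕ) where
  g : Fin θ → Γ
  χ : Fin θ → (Γ →* kˣ)
  chi_self : ∀ i, χ i (g i) ≠ 1
  chi_symm : ∀ i j, i ≠ j → χ i (g j) * χ j (g i) = 1
  lam : Fin θ → Fin θ → k
  lam_cond : ∀ i j, i < j → (g i * g j = 1 ∨ χ i * χ j ≠ 1) → lam i j = 0
  mu : Fin θ → k
  mu_mem : ∀ i, mu i = 0 ∨ mu i = 1
  mu_cond : ∀ i, (g i ^ orderOf (χ i (g i)) = 1 ∨ (χ i) ^ orderOf (χ i (g i)) ≠ 1) →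
    mu i = 0

namespace LiftingDatum

variable {k : Type*} [Field k] {Γ : Type*} [CommGroup Γ] [Fintype Γ] {θ : ℕ}

/-- `N_i`, the order of `χ_i(g_i)`. -/
def NN (Dat : LiftingDatum k Γ θ) (i : Fin θ) : ℕ := orderOf (Dat.χ i (Dat.g i))

end LiftingDatum

/-- A realization of the Hopf algebra `U(D)` obtained by lifting a finite quantum linear
space: grouplike elements `u_g` (`g ∈ Γ`), skew-primitive elements `x_1, …, x_θ`, the
defining relations, the prescribed comultiplication and counit values, and the PBW basis
`{u_g x₁^{m₁} ⋯ x_θ^{m_θ}}` (which pins down `H` as the presented Hopf algebra). -/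
structure UDData (k : Type*) [Field k] (Γ : Type*) [CommGroup Γ] [Fintype Γ] (θ : ℕ)
    (Dat : LiftingDatum k Γ θ) (H : Type*) [Ring H] [HopfAlgebra k H] where
  u : Γ →* H
  x : Fin θ → H
  rel_ux : ∀ (gg : Γ) (i : Fin θ), u gg * x i = ((Dat.χ i gg : kˣ) : k) • (x i * u gg)
  rel_xx : ∀ i j : Fin θ, i < j →
    x j * x i = ((Dat.χ i (Dat.g j) : kˣ) : k) • (x i * x j)
      + Dat.lam i j • ((1 : H) - u (Dat.g i) * u (Dat.g j))
  rel_xN : ∀ i : Fin θ, x i ^ Dat.NN i = Dat.mu i • ((1 : H) - u (Dat.g i) ^ Dat.NN i)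
  comul_u : ∀ gg : Γ, Coalgebra.comul (R := k) (u gg) = u gg ⊗ₜ[k] u gg
  comul_x : ∀ i : Fin θ,
    Coalgebra.comul (R := k) (x i) = x i ⊗ₜ[k] u (Dat.g i) + (1 : H) ⊗ₜ[k] x i
  counit_u : ∀ gg : Γ, Coalgebra.counit (R := k) (u gg) = 1
  counit_x : ∀ i : Fin θ, Coalgebra.counit (R := k) (x i) = 0
  basis : Module.Basis (Γ × (∀ i : Fin θ, Fin (Dat.NN i))) k H
  basis_eq : ∀ (gg : Γ) (m : ∀ i : Fin θ, Fin (Dat.NN i)),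
    basis (gg, m) = u gg * (List.ofFn fun i : Fin θ => x i ^ ((m i : ℕ))).prod

namespace UDData

variable {k : Type*} [Field k] {Γ : Type*} [CommGroup Γ] [Fintype Γ] {θ : ℕ}
  {Dat : LiftingDatum k Γ θ} {H : Type*} [Ring H] [HopfAlgebra k H]

/-- The monomial `x^m = x₁^{m₁} ⋯ x_θ^{m_θ}`. -/
def xpow (UD : UDData k Γ θ Dat H) (m : Fin θ → ℕ) : H :=
  (List.ofFn fun i : Fin θ => UD.x i ^ m i).prod

end UDData

end

noncomputable section

/-- The graded lexicographic order on exponent vectors: `n < m` iff `|n| < |m|`, or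
`|n| = |m|` and at the first index where they differ one has `n_j < m_j`. -/
def GrlexLT {θ : ℕ} (n m : Fin θ → ℕ) : Prop :=
  (∑ i, n i) < (∑ i, m i) ∨
    ((∑ i, n i) = (∑ i, m i) ∧ ∃ j : Fin θ, (∀ l : Fin θ, l < j → n l = m l) ∧ n j < m j)
end

/-!
Apply `id ⊗ φ` to `Δ(y) ∈ A ⊗ U(D)`, where `φ` is a coordinate form of the PBW basis: the result
lies in `A`. Modulo `U(D) ⊗ (monomials of degree ≤ |n| - 2)` one has
`Δ(x^n) ≡ 1 ⊗ x^n + Σ_l δ_l(n) x_l ⊗ u_{g_l} x^{n - e_l}`, with `δ_l(n) ≠ 0` when `0 < n_l < N_l`.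
The coordinate of `u_G x^m` extracts `c_G u_G` from `Δ(y)`, because every other monomial of `y`
is smaller than `x^m`; hence each homogeneous piece of `c` lies in `A`. For `c_{g₀} ≠ 0`, the
coordinate of `u_{g₀ g_k} x^{m - e_k}` extracts `c_{g₀} δ_k(m) u_{g₀} x_k` from the leading term
and, from a smaller monomial `x^n`, only multiples of `u_{g₀ g_k}` and of `u_{g₀ g_k g_l⁻¹} x_l`
with `n = m - e_k + e_l`, which is grlex-smaller than `m` only if `l > k`. Multiplying by
`u_{g₀}⁻¹ ∈ A` and rescaling gives (b).
-/

theorem List.prod_ofFn_update_mul {M : Type*} [Monoid M] :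
    ∀ {θ : ℕ} (f : Fin θ → M) (l : Fin θ), (∀ j, l < j → f j = 1) → ∀ a : M,
      (List.ofFn (Function.update f l (f l * a))).prod = (List.ofFn f).prod * a
  | 0, _, l, _, _ => l.elim0
  | θ + 1, f, l, hf, a => by
    rw [List.ofFn_succ', List.ofFn_succ', List.prod_concat, List.prod_concat]
    rcases Fin.eq_castSucc_or_eq_last l with ⟨l, rfl⟩ | rfl
    · have hlast : f (Fin.last θ) = 1 := hf _ (Fin.castSucc_lt_last l)
      have key := List.prod_ofFn_update_mul (fun i => f i.castSucc) l
        (fun j hj => hf _ (Fin.castSucc_lt_castSucc_iff.mpr hj)) a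
      simp only [Function.update_apply, Fin.castSucc_inj, (Fin.castSucc_lt_last l).ne',
        if_false, hlast, mul_one] at key ⊢
      convert key using 3
      funext i
      split_ifs with h <;> simp [h]
    · simp only [Function.update_apply, Fin.castSucc_ne_last, if_false, if_true, mul_assoc]

theorem Pi.induction_on_add_single_last {θ : ℕ} {P : (Fin θ → ℕ) → Prop} (zero : P 0)
    (step : ∀ p l, (∀ j, l < j → p j = 0) → P p → P (p + Pi.single l 1)) (n : Fin θ → ℕ) :
    P n := by
  induction hN : ∑ i, n i using Nat.strong_induction_on generalizing n with
  | _ N ih =>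
    by_cases hn : n = 0
    · exact hn ▸ zero
    obtain ⟨i, hi⟩ := Function.ne_iff.mp hn
    set s := Finset.univ.filter (fun j => n j ≠ 0)
    have hs : s.Nonempty := ⟨i, by simpa [s] using hi⟩
    set l := s.max' hs
    have hl : n l ≠ 0 := by simpa [s] using s.max'_mem hs
    have hvan : ∀ j, l < j → n j = 0 := fun j hj => by
      by_contra h
      exact (s.le_max' j (by simpa [s] using h)).not_gt hj
    set p := Function.update n l (n l - 1)
    have hnp : n = p + Pi.single l 1 := by
      funext j
      by_cases hj : j = l
      · subst hj; simp [p]; omega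
      · simp [p, hj]
    have hsum : ∑ j, p j < N := hN ▸ Finset.sum_lt_sum (fun j _ => by
        by_cases hj : j = l <;> simp [p, hj]) ⟨l, Finset.mem_univ _, by simp [p]; omega⟩
    rw [hnp]
    exact step p l (fun j hj => by simp [p, (hj.ne' : j ≠ l), hvan j hj])
      (ih _ hsum p rfl)

section ExponentVectors

variable {θ : ℕ}

theorem sum_add_single (p : Fin θ → ℕ) (l : Fin θ) :
    ∑ i, (p + Pi.single l 1 : Fin θ → ℕ) i = ∑ i, p i + 1 := by
  simp [Finset.sum_add_distrib]

theorem single_le_of_pos {p : Fin θ → ℕ} {l : Fin θ} (h : 0 < p l) : Pi.single l 1 ≤ p := by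
  intro j
  by_cases hj : j = l
  · subst hj; simpa using Nat.one_le_iff_ne_zero.mpr h.ne'
  · simp [hj]

theorem sub_single_eq_iff {n t : Fin θ → ℕ} {l : Fin θ} (h : 0 < n l) :
    n - Pi.single l 1 = t ↔ n = t + Pi.single l 1 := by
  constructor
  · rintro rfl
    exact (tsub_add_cancel_of_le (single_le_of_pos h)).symm
  · rintro rfl
    exact add_tsub_cancel_right _ _

theorem sub_single_add_single_comm (p : Fin θ → ℕ) {l l₀ : Fin θ} (hl : l ≠ l₀) :
    p - Pi.single l 1 + Pi.single l₀ 1 = p + Pi.single l₀ 1 - Pi.single l 1 := by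
  funext j
  by_cases hj : j = l
  · subst hj; simp [hl]
  · by_cases hj₀ : j = l₀
    · subst hj₀; simp [hj]
    · simp [hj, hj₀]

end ExponentVectors

section TensorRange

open TensorProduct

theorem tmul_mem_range_lTensor {R M N : Type*} [CommSemiring R] [AddCommMonoid M]
    [AddCommMonoid N] [Module R M] [Module R N] {W : Submodule R N} (m : M) {n : N}
    (hn : n ∈ W) : m ⊗ₜ[R] n ∈ LinearMap.range (LinearMap.lTensor M W.subtype) :=
  ⟨m ⊗ₜ ⟨n, hn⟩, rfl⟩

variable {R A : Type*} [CommSemiring R] [Semiring A] [Algebra R A]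

theorem mul_tmul_mem_range_lTensor {W W' : Submodule R A} {c : A}
    (hc : W ≤ W'.comap (LinearMap.mulRight R c)) (b : A) {t : A ⊗[R] A}
    (ht : t ∈ LinearMap.range (LinearMap.lTensor A W.subtype)) :
    t * (b ⊗ₜ c) ∈ LinearMap.range (LinearMap.lTensor A W'.subtype) := by
  obtain ⟨s, rfl⟩ := ht
  induction s using TensorProduct.induction_on with
  | zero => simp
  | tmul a w => simpa using tmul_mem_range_lTensor (W := W') (a * b) (hc w.2)
  | add s₁ s₂ h₁ h₂ => rw [map_add, add_mul]; exact add_mem h₁ h₂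

theorem tmul_mul_mem_range_lTensor {W W' : Submodule R A} {c : A}
    (hc : W ≤ W'.comap (LinearMap.mulLeft R c)) (b : A) {t : A ⊗[R] A}
    (ht : t ∈ LinearMap.range (LinearMap.lTensor A W.subtype)) :
    (b ⊗ₜ c) * t ∈ LinearMap.range (LinearMap.lTensor A W'.subtype) := by
  obtain ⟨s, rfl⟩ := ht
  induction s using TensorProduct.induction_on with
  | zero => simp
  | tmul a w => simpa using tmul_mem_range_lTensor (W := W') (b * a) (hc w.2)
  | add s₁ s₂ h₁ h₂ => rw [map_add, mul_add]; exact add_mem h₁ h₂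

end TensorRange

section SliceRight

open TensorProduct

variable {R M N : Type*} [CommSemiring R] [AddCommMonoid M] [AddCommMonoid N] [Module R M]
  [Module R N]

def sliceRight (f : N →ₗ[R] R) : M ⊗[R] N →ₗ[R] M :=
  (TensorProduct.rid R M).toLinearMap ∘ₗ LinearMap.lTensor M f

@[simp]
theorem sliceRight_tmul (f : N →ₗ[R] R) (m : M) (n : N) :
    sliceRight f (m ⊗ₜ n) = f n • m := by
  simp [sliceRight]

theorem sliceRight_mem (S : Submodule R M) (f : N →ₗ[R] R) {t : M ⊗[R] N}
    (ht : t ∈ LinearMap.range (TensorProduct.map S.subtype (LinearMap.id (R := R) (M := N)))) :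
    sliceRight f t ∈ S := by
  obtain ⟨s, rfl⟩ := ht
  induction s using TensorProduct.induction_on with
  | zero => simp
  | tmul a n => simpa using S.smul_mem (f n) a.2
  | add s₁ s₂ h₁ h₂ => rw [map_add, map_add]; exact add_mem h₁ h₂

theorem sliceRight_eq_zero {W : Submodule R N} {f : N →ₗ[R] R} (hW : W ≤ LinearMap.ker f)
    {t : M ⊗[R] N} (ht : t ∈ LinearMap.range (LinearMap.lTensor M W.subtype)) :
    sliceRight f t = 0 := by
  obtain ⟨s, rfl⟩ := ht
  induction s using TensorProduct.induction_on with
  | zero => simp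
  | tmul a w => simp [LinearMap.mem_ker.mp (hW w.2)]
  | add s₁ s₂ h₁ h₂ => rw [map_add, map_add, h₁, h₂, add_zero]

end SliceRight

section Grlex

variable {θ : ℕ}

theorem GrlexLT.sum_le {n m : Fin θ → ℕ} (h : GrlexLT n m) : ∑ i, n i ≤ ∑ i, m i :=
  h.elim le_of_lt fun h => h.1.le

theorem GrlexLT.ne {n m : Fin θ → ℕ} (h : GrlexLT n m) : n ≠ m := by
  rintro rfl
  rcases h with h | ⟨-, j, -, hj⟩ <;> omega

theorem GrlexLT.lt_of_add_single {t : Fin θ → ℕ} {i l : Fin θ}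
    (h : GrlexLT (t + Pi.single l 1) (t + Pi.single i 1)) : i < l := by
  rcases h with h | ⟨-, j, hagree, hj⟩
  · rw [sum_add_single, sum_add_single] at h
    omega
  have hji : j = i ∧ j ≠ l := by
    by_cases hjl : j = l <;> by_cases hji : j = i <;> simp_all
  obtain ⟨rfl, hjl⟩ := hji
  refine lt_of_le_of_ne (not_lt.mp fun hlj => ?_) hjl
  simpa [hlj.ne] using hagree l hlj

end Grlex

theorem MonoidHom.map_inv_mem_of_map_mem {G M S : Type*} [Group G] [Finite G] [Monoid M]
    [SetLike S M] [SubmonoidClass S M] (f : G →* M) {s : S} {g : G} (hg : f g ∈ s) :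
    f g⁻¹ ∈ s := by
  rw [← one_mul g⁻¹, ← pow_one g, ← pow_orderOf_eq_one g, ← pow_sub g (orderOf_pos g), map_pow]
  exact pow_mem hg _

namespace LiftingDatum

variable {k : Type*} [Field k] {Γ : Type*} [CommGroup Γ] [Fintype Γ] {θ : ℕ}
  (Dat : LiftingDatum k Γ θ)

def twist (h : Γ) (p : Fin θ → ℕ) : kˣ :=
  ∏ j, (Dat.χ j h)⁻¹ ^ p j

/-- The coefficient of `x_l ⊗ u_{g_l} x^{n - e_l}` in `Δ(x^n)`: moving `u_{g_l}` past the factors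
`x_j^{n_j}`, `j < l`, gives the product, and the `n_l` copies of `x_l` give the quantum integer
`(n_l)_q` for `q = χ_l(g_l)⁻¹`. -/
def comulCoeff (n : Fin θ → ℕ) (l : Fin θ) : k :=
  ((∏ j ∈ Finset.Iio l, (Dat.χ j (Dat.g l))⁻¹ ^ n j : kˣ) : k) *
    ∑ t ∈ Finset.range (n l), (((Dat.χ l (Dat.g l))⁻¹ : kˣ) : k) ^ t

@[simp]
theorem twist_zero (h : Γ) : Dat.twist h 0 = 1 := by
  simp [twist]

theorem twist_add_single (h : Γ) (p : Fin θ → ℕ) (l : Fin θ) :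
    Dat.twist h (p + Pi.single l 1) = Dat.twist h p * (Dat.χ l h)⁻¹ := by
  simp only [twist, Pi.add_apply, pow_add, Finset.prod_mul_distrib]
  congr 1
  rw [Finset.prod_eq_single l (fun j _ hj => by simp [hj]) (by simp)]
  simp

theorem comulCoeff_of_eq_zero {n : Fin θ → ℕ} {l : Fin θ} (h : n l = 0) :
    Dat.comulCoeff n l = 0 := by
  simp [comulCoeff, h]

theorem comulCoeff_add_single_self {p : Fin θ → ℕ} {l : Fin θ} (hp : ∀ j, l < j → p j = 0) :
    Dat.comulCoeff (p + Pi.single l 1) l = Dat.comulCoeff p l + Dat.twist (Dat.g l) p := by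
  have htwist : Dat.twist (Dat.g l) p
      = (∏ j ∈ Finset.Iio l, (Dat.χ j (Dat.g l))⁻¹ ^ p j) * (Dat.χ l (Dat.g l))⁻¹ ^ p l := by
    rw [twist, ← Finset.prod_subset (Finset.subset_univ (insert l (Finset.Iio l))) (fun j _ hj => by
      simp only [Finset.mem_insert, Finset.mem_Iio, not_or, not_lt] at hj
      simp [hp j (lt_of_le_of_ne hj.2 (Ne.symm hj.1))]), Finset.prod_insert (by simp), mul_comm]
  have hIio : ∀ j ∈ Finset.Iio l, (Dat.χ j (Dat.g l))⁻¹ ^ (p + Pi.single l 1 : Fin θ → ℕ) j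
      = (Dat.χ j (Dat.g l))⁻¹ ^ p j := fun j hj => by
    simp [(Finset.mem_Iio.mp hj).ne]
  rw [comulCoeff, comulCoeff, Finset.prod_congr rfl hIio, Pi.add_apply, Pi.single_eq_same,
    Finset.sum_range_succ, mul_add, htwist, Units.val_mul, Units.val_pow_eq_pow_val]

theorem comulCoeff_add_single_of_ne {p : Fin θ → ℕ} {l₀ l : Fin θ} (hp : ∀ j, l₀ < j → p j = 0)
    (hl : l ≠ l₀) : Dat.comulCoeff (p + Pi.single l₀ 1) l = Dat.comulCoeff p l := by
  rcases hl.lt_or_gt with hlt | hgt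
  · have hIio : ∀ j ∈ Finset.Iio l, (Dat.χ j (Dat.g l))⁻¹ ^ (p + Pi.single l₀ 1 : Fin θ → ℕ) j
        = (Dat.χ j (Dat.g l))⁻¹ ^ p j := fun j hj => by
      simp [((Finset.mem_Iio.mp hj).trans hlt).ne]
    rw [comulCoeff, comulCoeff, Finset.prod_congr rfl hIio]
    simp [hl]
  · rw [Dat.comulCoeff_of_eq_zero (by simp [hl, hp l hgt]), Dat.comulCoeff_of_eq_zero (hp l hgt)]

theorem comulCoeff_ne_zero {n : Fin θ → ℕ} {l : Fin θ} (h0 : 0 < n l) (hN : n l < Dat.NN l) :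
    Dat.comulCoeff n l ≠ 0 := by
  refine mul_ne_zero (Units.ne_zero _) fun hsum => hN.not_ge ?_
  have hgeom := geom_sum_mul (((Dat.χ l (Dat.g l))⁻¹ : kˣ) : k) (n l)
  rw [hsum, zero_mul, eq_comm, sub_eq_zero, ← Units.val_pow_eq_pow_val, Units.val_eq_one] at hgeom
  rw [NN, ← orderOf_inv]
  exact Nat.le_of_dvd h0 (orderOf_dvd_of_pow_eq_one hgeom)

end LiftingDatum

namespace UDData

open TensorProduct
open scoped Classical

variable {k : Type*} [Field k] {Γ : Type*} [CommGroup Γ] [Fintype Γ] {θ : ℕ}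
  {Dat : LiftingDatum k Γ θ} {H : Type*} [Ring H] [HopfAlgebra k H]
  (UD : UDData k Γ θ Dat H)

@[simp]
theorem xpow_zero : UD.xpow 0 = 1 :=
  List.prod_eq_one (by simp)

theorem xpow_add_single {p : Fin θ → ℕ} {l : Fin θ} (hp : ∀ j, l < j → p j = 0) :
    UD.xpow (p + Pi.single l 1) = UD.xpow p * UD.x l := by
  have hfun : (fun i => UD.x i ^ (p + Pi.single l 1 : Fin θ → ℕ) i)
      = Function.update (fun i => UD.x i ^ p i) l (UD.x l ^ p l * UD.x l) := by
    funext i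
    by_cases hi : i = l
    · subst hi; simp [pow_succ]
    · simp [hi]
  rw [xpow, hfun, List.prod_ofFn_update_mul _ l (fun j hj => by simp [hp j hj])]
  rfl

theorem x_mul_u (l : Fin θ) (h : Γ) :
    UD.x l * UD.u h = (((Dat.χ l h)⁻¹ : kˣ) : k) • (UD.u h * UD.x l) := by
  rw [UD.rel_ux h l, smul_smul, ← Units.val_mul, inv_mul_cancel, Units.val_one, one_smul]

theorem xpow_mul_u (p : Fin θ → ℕ) (h : Γ) :
    UD.xpow p * UD.u h = (Dat.twist h p : k) • (UD.u h * UD.xpow p) := by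
  induction p using Pi.induction_on_add_single_last with
  | zero => simp
  | step p l hp ih =>
    rw [UD.xpow_add_single hp, mul_assoc, UD.x_mul_u, mul_smul_comm, ← mul_assoc, ih,
      smul_mul_assoc, smul_smul, mul_assoc, Dat.twist_add_single, Units.val_mul, mul_comm]

theorem u_mul_u_mul (g h : Γ) (z : H) : UD.u g * (UD.u h * z) = UD.u (g * h) * z := by
  rw [← mul_assoc, ← map_mul]

/-- The condition `q ≤ n` keeps `q` an exponent of the PBW basis whenever `n` is one. -/
def lowSpan (n : Fin θ → ℕ) : Submodule k H :=
  Submodule.span k {z | ∃ (h : Γ) (q : Fin θ → ℕ),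
    q ≤ n ∧ ∑ i, q i + 2 ≤ ∑ i, n i ∧ z = UD.u h * UD.xpow q}

def lowTensor (n : Fin θ → ℕ) : Submodule k (H ⊗[k] H) :=
  LinearMap.range (LinearMap.lTensor H (UD.lowSpan n).subtype)

def comulFirstOrder (n : Fin θ → ℕ) : H ⊗[k] H :=
  ∑ l, Dat.comulCoeff n l • (UD.x l ⊗ₜ[k] (UD.u (Dat.g l) * UD.xpow (n - Pi.single l 1)))

theorem lowSpan_le_comap_mulLeft_u (n : Fin θ → ℕ) (g : Γ) :
    UD.lowSpan n ≤ (UD.lowSpan n).comap (LinearMap.mulLeft k (UD.u g)) :=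
  Submodule.span_le.mpr fun _ ⟨h, q, hq, hsum, hz⟩ =>
    Submodule.subset_span ⟨g * h, q, hq, hsum, by rw [hz, LinearMap.mulLeft_apply, u_mul_u_mul]⟩

theorem lowSpan_le_comap_mulRight_u (p : Fin θ → ℕ) (l : Fin θ) (g : Γ) :
    UD.lowSpan p ≤ (UD.lowSpan (p + Pi.single l 1)).comap (LinearMap.mulRight k (UD.u g)) := by
  refine Submodule.span_le.mpr fun _ ⟨h, q, hq, hsum, hz⟩ => ?_
  simp only [SetLike.mem_coe, Submodule.mem_comap, LinearMap.mulRight_apply, hz, mul_assoc,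
    xpow_mul_u, mul_smul_comm, u_mul_u_mul]
  exact Submodule.smul_mem _ _ (Submodule.subset_span
    ⟨h * g, q, hq.trans le_self_add, by rw [sum_add_single]; omega, rfl⟩)

theorem lowSpan_le_comap_mulRight_x {p : Fin θ → ℕ} {l : Fin θ} (hp : ∀ j, l < j → p j = 0) :
    UD.lowSpan p ≤ (UD.lowSpan (p + Pi.single l 1)).comap (LinearMap.mulRight k (UD.x l)) := by
  refine Submodule.span_le.mpr fun _ ⟨h, q, hq, hsum, hz⟩ => ?_
  have hq' : ∀ j, l < j → q j = 0 := fun j hj => Nat.eq_zero_of_le_zero (hp j hj ▸ hq j)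
  simp only [SetLike.mem_coe, Submodule.mem_comap, LinearMap.mulRight_apply, hz, mul_assoc,
    ← UD.xpow_add_single hq']
  exact Submodule.subset_span ⟨h, q + Pi.single l 1, add_le_add hq le_rfl,
    by rw [sum_add_single, sum_add_single]; omega, rfl⟩

theorem comulFirstOrder_mul_mem (p : Fin θ → ℕ) (l : Fin θ) (b : H) (g : Γ) :
    UD.comulFirstOrder p * (b ⊗ₜ UD.u g) ∈ UD.lowTensor (p + Pi.single l 1) := by
  rw [comulFirstOrder, Finset.sum_mul]
  refine Submodule.sum_mem _ fun j _ => ?_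
  rcases Nat.eq_zero_or_pos (p j) with hj | hj
  · simp [Dat.comulCoeff_of_eq_zero hj]
  rw [smul_mul_assoc, Algebra.TensorProduct.tmul_mul_tmul, mul_assoc, xpow_mul_u, mul_smul_comm,
    u_mul_u_mul, tmul_smul]
  refine Submodule.smul_mem _ _ (Submodule.smul_mem _ _ (tmul_mem_range_lTensor _
    (Submodule.subset_span ⟨Dat.g j * g, p - Pi.single j 1, tsub_le_self.trans le_self_add, ?_,
      rfl⟩)))
  have := congrArg (fun q : Fin θ → ℕ => ∑ i, q i) (tsub_add_cancel_of_le (single_le_of_pos hj))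
  rw [sum_add_single] at this
  rw [sum_add_single]; omega

theorem xpow_sub_single_mul_x {p : Fin θ → ℕ} {l₀ : Fin θ} (hp : ∀ j, l₀ < j → p j = 0)
    (l : Fin θ) :
    UD.xpow (p - Pi.single l 1) * UD.x l₀ = UD.xpow (p - Pi.single l 1 + Pi.single l₀ 1) :=
  (UD.xpow_add_single fun j hj => by simp [hp j hj]).symm

theorem comulFirstOrder_add_single {p : Fin θ → ℕ} {l₀ : Fin θ} (hp : ∀ j, l₀ < j → p j = 0) :
    UD.comulFirstOrder (p + Pi.single l₀ 1)
      = (Dat.twist (Dat.g l₀) p : k) • (UD.x l₀ ⊗ₜ (UD.u (Dat.g l₀) * UD.xpow p))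
        + UD.comulFirstOrder p * (1 ⊗ₜ UD.x l₀) := by
  have hterm : ∀ l, Dat.comulCoeff (p + Pi.single l₀ 1) l
        • (UD.x l ⊗ₜ[k] (UD.u (Dat.g l) * UD.xpow (p + Pi.single l₀ 1 - Pi.single l 1)))
      = (if l = l₀ then (Dat.twist (Dat.g l₀) p : k) • (UD.x l₀ ⊗ₜ (UD.u (Dat.g l₀) * UD.xpow p))
          else 0)
        + Dat.comulCoeff p l • (UD.x l ⊗ₜ[k] (UD.u (Dat.g l) * UD.xpow (p - Pi.single l 1)))
          * (1 ⊗ₜ UD.x l₀) := by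
    intro l
    rw [smul_mul_assoc, Algebra.TensorProduct.tmul_mul_tmul, mul_one, mul_assoc,
      UD.xpow_sub_single_mul_x hp]
    by_cases hl : l = l₀
    · subst hl
      rw [if_pos rfl, Dat.comulCoeff_add_single_self hp, add_tsub_cancel_right, add_smul,
        add_comm]
      rcases Nat.eq_zero_or_pos (p l) with h0 | hpos
      · simp [Dat.comulCoeff_of_eq_zero h0]
      · rw [tsub_add_cancel_of_le (single_le_of_pos hpos)]
    · rw [if_neg hl, zero_add, Dat.comulCoeff_add_single_of_ne hp hl,
        sub_single_add_single_comm p hl]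
  rw [comulFirstOrder, comulFirstOrder, Finset.sum_congr rfl fun l _ => hterm l,
    Finset.sum_add_distrib, Finset.sum_ite_eq', if_pos (Finset.mem_univ _), Finset.sum_mul]

theorem comul_xpow_sub_mem (n : Fin θ → ℕ) :
    Coalgebra.comul (R := k) (UD.xpow n) - 1 ⊗ₜ UD.xpow n - UD.comulFirstOrder n
      ∈ UD.lowTensor n := by
  induction n using Pi.induction_on_add_single_last with
  | zero =>
    simp [comulFirstOrder, Dat.comulCoeff_of_eq_zero, Algebra.TensorProduct.one_def]
  | step p l hp ih =>
    set E := Coalgebra.comul (R := k) (UD.xpow p) - 1 ⊗ₜ UD.xpow p - UD.comulFirstOrder p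
    have hcomul : Coalgebra.comul (R := k) (UD.xpow (p + Pi.single l 1))
        = (1 ⊗ₜ UD.xpow p + UD.comulFirstOrder p + E)
          * (UD.x l ⊗ₜ UD.u (Dat.g l) + 1 ⊗ₜ UD.x l) := by
      rw [UD.xpow_add_single hp, Bialgebra.comul_mul, UD.comul_x]
      congr 1
      simp only [E]
      abel
    have hsplit : Coalgebra.comul (R := k) (UD.xpow (p + Pi.single l 1))
          - 1 ⊗ₜ UD.xpow (p + Pi.single l 1) - UD.comulFirstOrder (p + Pi.single l 1)
        = UD.comulFirstOrder p * (UD.x l ⊗ₜ UD.u (Dat.g l)) + E * (UD.x l ⊗ₜ UD.u (Dat.g l))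
          + E * (1 ⊗ₜ UD.x l) := by
      rw [hcomul, UD.comulFirstOrder_add_single hp, UD.xpow_add_single hp]
      simp only [add_mul, mul_add, Algebra.TensorProduct.tmul_mul_tmul, one_mul, mul_one,
        xpow_mul_u, tmul_smul]
      abel
    rw [hsplit]
    exact add_mem (add_mem (UD.comulFirstOrder_mul_mem p l _ _)
      (mul_tmul_mem_range_lTensor (UD.lowSpan_le_comap_mulRight_u p l _) _ ih))
      (mul_tmul_mem_range_lTensor (UD.lowSpan_le_comap_mulRight_x hp) _ ih)

/-- The zero form when `t` is not an exponent vector of the PBW basis. -/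
noncomputable def pbwCoeff (G : Γ) (t : Fin θ → ℕ) : H →ₗ[k] k :=
  if ht : ∀ i, t i < Dat.NN i then UD.basis.coord (G, fun i => ⟨t i, ht i⟩) else 0

theorem pbwCoeff_u_mul_xpow (G g : Γ) {n : Fin θ → ℕ} (t : Fin θ → ℕ)
    (hn : ∀ i, n i < Dat.NN i) :
    UD.pbwCoeff G t (UD.u g * UD.xpow n) = if g = G ∧ n = t then 1 else 0 := by
  have hbasis : UD.u g * UD.xpow n = UD.basis (g, fun i => ⟨n i, hn i⟩) := by
    rw [UD.basis_eq]; rfl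
  unfold pbwCoeff
  split_ifs with ht h h
  · obtain ⟨rfl, rfl⟩ := h
    simp [hbasis]
  · rw [hbasis, Module.Basis.coord_apply, Module.Basis.repr_self, Finsupp.single_apply, if_neg]
    intro heq
    simp only [Prod.mk.injEq] at heq
    exact h ⟨heq.1, funext fun i => congrArg Fin.val (congrFun heq.2 i)⟩
  · exact absurd (h.2 ▸ hn) ht
  · rfl

theorem lowSpan_le_ker_pbwCoeff (G : Γ) {n t : Fin θ → ℕ} (hn : ∀ i, n i < Dat.NN i)
    (hnt : ∑ i, n i ≤ ∑ i, t i + 1) : UD.lowSpan n ≤ LinearMap.ker (UD.pbwCoeff G t) := by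
  refine Submodule.span_le.mpr fun _ ⟨h, q, hq, hsum, hz⟩ => ?_
  rw [SetLike.mem_coe, LinearMap.mem_ker, hz,
    UD.pbwCoeff_u_mul_xpow _ _ _ fun i => (hq i).trans_lt (hn i), if_neg]
  rintro ⟨-, rfl⟩
  omega

theorem sliceRight_comul_u_mul_xpow (G : Γ) (t : Fin θ → ℕ) (g : Γ) {n : Fin θ → ℕ}
    (hn : ∀ i, n i < Dat.NN i) (hnt : ∑ i, n i ≤ ∑ i, t i + 1) :
    sliceRight (UD.pbwCoeff G t) (Coalgebra.comul (R := k) (UD.u g * UD.xpow n))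
      = (if g = G ∧ n = t then UD.u g else 0)
        + ∑ l, if g * Dat.g l = G ∧ n = t + Pi.single l 1
            then Dat.comulCoeff n l • (UD.u g * UD.x l) else 0 := by
  set E := Coalgebra.comul (R := k) (UD.xpow n) - 1 ⊗ₜ UD.xpow n - UD.comulFirstOrder n
  have hcomul : Coalgebra.comul (R := k) (UD.u g * UD.xpow n)
      = (UD.u g ⊗ₜ UD.u g) * (1 ⊗ₜ UD.xpow n) + (UD.u g ⊗ₜ UD.u g) * UD.comulFirstOrder n
        + (UD.u g ⊗ₜ UD.u g) * E := by
    rw [Bialgebra.comul_mul, UD.comul_u, ← mul_add, ← mul_add]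
    congr 1
    simp only [E]
    abel
  have hE : sliceRight (UD.pbwCoeff G t) ((UD.u g ⊗ₜ UD.u g) * E) = 0 :=
    sliceRight_eq_zero (UD.lowSpan_le_ker_pbwCoeff G hn hnt)
      (tmul_mul_mem_range_lTensor (UD.lowSpan_le_comap_mulLeft_u n g) _ (UD.comul_xpow_sub_mem n))
  rw [hcomul, map_add, map_add, hE, add_zero]
  congr 1
  · rw [Algebra.TensorProduct.tmul_mul_tmul, mul_one, sliceRight_tmul,
      UD.pbwCoeff_u_mul_xpow _ _ _ hn]
    split_ifs <;> simp
  · rw [comulFirstOrder, Finset.mul_sum, map_sum]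
    refine Finset.sum_congr rfl fun l _ => ?_
    rw [mul_smul_comm, Algebra.TensorProduct.tmul_mul_tmul, u_mul_u_mul, map_smul, sliceRight_tmul,
      UD.pbwCoeff_u_mul_xpow (n := n - Pi.single l 1) _ _ _
        fun i => (tsub_le_self (a := n i)).trans_lt (hn i), smul_smul]
    rcases Nat.eq_zero_or_pos (n l) with h0 | hpos
    · have hne : n ≠ t + Pi.single l 1 := fun h => by simp [h] at h0
      simp [Dat.comulCoeff_of_eq_zero h0, hne]
    · simp only [sub_single_eq_iff hpos]
      split_ifs <;> simp

def grlexLowerSpan (m : Fin θ → ℕ) : Submodule k H :=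
  Submodule.span k {z : H | ∃ (gg : Γ) (n : Fin θ → ℕ),
    (∀ i, n i < Dat.NN i) ∧ GrlexLT n m ∧ z = UD.u gg * UD.xpow n}

theorem sliceRight_comul_u_mul_xpow_of_sum_le (G g : Γ) {n m : Fin θ → ℕ}
    (hn : ∀ i, n i < Dat.NN i) (hnm : ∑ i, n i ≤ ∑ i, m i) :
    sliceRight (UD.pbwCoeff G m) (Coalgebra.comul (R := k) (UD.u g * UD.xpow n))
      = if g = G ∧ n = m then UD.u g else 0 := by
  rw [UD.sliceRight_comul_u_mul_xpow G m g hn (hnm.trans (Nat.le_succ _)),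
    Finset.sum_eq_zero, add_zero]
  rintro l -
  rw [if_neg]
  rintro ⟨-, rfl⟩
  rw [sum_add_single] at hnm
  omega

theorem sliceRight_comul_eq_zero_of_mem_grlexLowerSpan (G : Γ) {m : Fin θ → ℕ} {r : H}
    (hr : r ∈ UD.grlexLowerSpan m) :
    sliceRight (UD.pbwCoeff G m) (Coalgebra.comul (R := k) r) = 0 := by
  refine (Submodule.span_le (p := LinearMap.ker
    (sliceRight (UD.pbwCoeff G m) ∘ₗ Coalgebra.comul (R := k) (A := H)))).mpr ?_ hr
  rintro _ ⟨gg, n, hn, hnm, rfl⟩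
  simp only [SetLike.mem_coe, LinearMap.mem_ker, LinearMap.comp_apply,
    UD.sliceRight_comul_u_mul_xpow_of_sum_le G gg hn hnm.sum_le, hnm.ne, and_false, if_false]

theorem sliceRight_comul_leading_add_lower (G : Γ) {m : Fin θ → ℕ} (hm : ∀ i, m i < Dat.NN i)
    (cg : Γ → k) {r : H} (hr : r ∈ UD.grlexLowerSpan m) :
    sliceRight (UD.pbwCoeff G m) (Coalgebra.comul (R := k) (∑ g, cg g • (UD.u g * UD.xpow m) + r))
      = cg G • UD.u G := by
  rw [map_add, map_add, UD.sliceRight_comul_eq_zero_of_mem_grlexLowerSpan G hr, add_zero,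
    map_sum, map_sum]
  simp only [map_smul, UD.sliceRight_comul_u_mul_xpow_of_sum_le G _ hm le_rfl]
  simp

def tailMap (i : Fin θ) : ((Fin θ → k) × k) →ₗ[k] H :=
  (∑ l ∈ Finset.Ioi i, (LinearMap.proj l).smulRight (UD.u (Dat.g i * (Dat.g l)⁻¹) * UD.x l)).coprod
    (LinearMap.id.smulRight (UD.u (Dat.g i)))

theorem tailMap_apply (i : Fin θ) (β : Fin θ → k) (α : k) :
    UD.tailMap i (β, α)
      = ∑ l ∈ Finset.Ioi i, β l • (UD.u (Dat.g i * (Dat.g l)⁻¹) * UD.x l) + α • UD.u (Dat.g i) := by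
  simp [tailMap]

def tailSpan (g₀ : Γ) (i : Fin θ) : Submodule k H :=
  (LinearMap.range (UD.tailMap i)).map (LinearMap.mulLeft k (UD.u g₀))

theorem u_mem_tailSpan (g₀ : Γ) (i : Fin θ) : UD.u (g₀ * Dat.g i) ∈ UD.tailSpan g₀ i :=
  ⟨_, ⟨(0, 1), rfl⟩, by simp [tailMap_apply]⟩

theorem u_mul_x_mem_tailSpan (g₀ : Γ) {i l : Fin θ} (hil : i < l) :
    UD.u (g₀ * Dat.g i * (Dat.g l)⁻¹) * UD.x l ∈ UD.tailSpan g₀ i :=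
  ⟨_, ⟨(Pi.single l 1, 0), rfl⟩, by
    rw [LinearMap.mulLeft_apply, tailMap_apply, zero_smul, add_zero,
      Finset.sum_eq_single_of_mem l (Finset.mem_Ioi.mpr hil) fun j _ hj => by simp [hj],
      Pi.single_eq_same, one_smul, u_mul_u_mul, mul_assoc g₀]⟩

theorem sliceRight_comul_u_mul_xpow_add_single (g₀ g : Γ) {t : Fin θ → ℕ} {i : Fin θ}
    (hn : ∀ j, (t + Pi.single i 1 : Fin θ → ℕ) j < Dat.NN j) :
    sliceRight (UD.pbwCoeff (g₀ * Dat.g i) t)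
        (Coalgebra.comul (R := k) (UD.u g * UD.xpow (t + Pi.single i 1)))
      = if g = g₀ then Dat.comulCoeff (t + Pi.single i 1) i • (UD.u g₀ * UD.x i) else 0 := by
  rw [UD.sliceRight_comul_u_mul_xpow _ t g hn (sum_add_single t i).le,
    if_neg fun h => by simpa using congrFun h.2 i, zero_add,
    Finset.sum_eq_single i (fun l _ hli => if_neg fun h => hli ?_) (by simp)]
  · by_cases hg : g = g₀ <;> simp [hg]
  · simpa [Pi.single_apply, hli] using congrFun (add_left_cancel h.2) l

theorem sliceRight_comul_u_mul_xpow_mem_tailSpan (g₀ g : Γ) {n t : Fin θ → ℕ} {i : Fin θ}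
    (hn : ∀ j, n j < Dat.NN j) (hnt : GrlexLT n (t + Pi.single i 1)) :
    sliceRight (UD.pbwCoeff (g₀ * Dat.g i) t) (Coalgebra.comul (R := k) (UD.u g * UD.xpow n))
      ∈ UD.tailSpan g₀ i := by
  rw [UD.sliceRight_comul_u_mul_xpow _ t g hn (sum_add_single t i ▸ hnt.sum_le)]
  refine add_mem ?_ (Submodule.sum_mem _ fun l _ => ?_)
  · split_ifs with h
    · exact h.1 ▸ UD.u_mem_tailSpan g₀ i
    · exact zero_mem _
  · split_ifs with h
    · obtain ⟨hg, rfl⟩ := h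
      rw [eq_mul_inv_of_mul_eq hg]
      exact Submodule.smul_mem _ _ (UD.u_mul_x_mem_tailSpan g₀ hnt.lt_of_add_single)
    · exact zero_mem _

theorem sliceRight_comul_mem_tailSpan_of_mem_grlexLowerSpan (g₀ : Γ) {t : Fin θ → ℕ}
    {i : Fin θ} {r : H} (hr : r ∈ UD.grlexLowerSpan (t + Pi.single i 1)) :
    sliceRight (UD.pbwCoeff (g₀ * Dat.g i) t) (Coalgebra.comul (R := k) r)
      ∈ UD.tailSpan g₀ i := by
  refine (Submodule.span_le (p := (UD.tailSpan g₀ i).comap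
    (sliceRight (UD.pbwCoeff (g₀ * Dat.g i) t) ∘ₗ Coalgebra.comul (R := k) (A := H)))).mpr ?_ hr
  rintro _ ⟨gg, n, hn, hnt, rfl⟩
  exact UD.sliceRight_comul_u_mul_xpow_mem_tailSpan g₀ gg hn hnt

theorem sliceRight_comul_leading_add_lower_sub_mem_tailSpan (g₀ : Γ) {t : Fin θ → ℕ} {i : Fin θ}
    (hm : ∀ j, (t + Pi.single i 1 : Fin θ → ℕ) j < Dat.NN j) (cg : Γ → k) {r : H}
    (hr : r ∈ UD.grlexLowerSpan (t + Pi.single i 1)) :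
    sliceRight (UD.pbwCoeff (g₀ * Dat.g i) t) (Coalgebra.comul (R := k)
        (∑ g, cg g • (UD.u g * UD.xpow (t + Pi.single i 1)) + r))
      - (cg g₀ * Dat.comulCoeff (t + Pi.single i 1) i) • (UD.u g₀ * UD.x i)
      ∈ UD.tailSpan g₀ i := by
  rw [map_add, map_add, map_sum, map_sum]
  simp only [map_smul, UD.sliceRight_comul_u_mul_xpow_add_single g₀ _ hm, smul_ite, smul_zero,
    Finset.sum_ite_eq', Finset.mem_univ, if_true, smul_smul, add_sub_cancel_left]
  exact UD.sliceRight_comul_mem_tailSpan_of_mem_grlexLowerSpan g₀ hr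

theorem exists_tail_mem_of_sub_smul_mem_tailSpan {A : Subalgebra k H} {g₀ : Γ} (hg₀ : UD.u g₀⁻¹ ∈ A)
    {i : Fin θ} {κ : k} (hκ : κ ≠ 0) {z : H} (hz : z ∈ A)
    (hzv : z - κ • (UD.u g₀ * UD.x i) ∈ UD.tailSpan g₀ i) :
    ∃ (β : Fin θ → k) (α : k),
      UD.x i + (∑ l ∈ Finset.Ioi i, β l • (UD.u (Dat.g i * (Dat.g l)⁻¹) * UD.x l))
        + α • UD.u (Dat.g i) ∈ A := by
  obtain ⟨_, ⟨⟨β, α⟩, rfl⟩, hv⟩ := hzv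
  refine ⟨κ⁻¹ • β, κ⁻¹ * α, ?_⟩
  have hz' : z = κ • (UD.u g₀ * UD.x i) + UD.u g₀ * UD.tailMap i (β, α) := by
    rw [LinearMap.mulLeft_apply] at hv
    rw [hv]
    abel
  have hu : ∀ w : H, UD.u g₀⁻¹ * (UD.u g₀ * w) = w := fun w => by
    rw [u_mul_u_mul, inv_mul_cancel, map_one, one_mul]
  convert A.smul_mem (A.mul_mem hg₀ hz) κ⁻¹ using 1
  rw [hz', mul_add, mul_smul_comm, hu, hu, smul_add, smul_smul, inv_mul_cancel₀ hκ, one_smul,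
    tailMap_apply, smul_add, Finset.smul_sum, add_assoc]
  simp only [smul_smul, Pi.smul_apply, smul_eq_mul]

end UDData

theorem leading_coefficient_in_coideal_subalgebra_general
    {k : Type*} [Field k]
    {Γ : Type*} [CommGroup Γ] [Fintype Γ] {θ : ℕ} {Dat : LiftingDatum k Γ θ}
    {H : Type*} [Ring H] [HopfAlgebra k H] (UD : UDData k Γ θ Dat H)
    (A : Subalgebra k H) (hA : IsRightCoidealSubalgebra k A)
    (y : H) (hyA : y ∈ A)
    (c : H) (hc : c ∈ Submodule.span k (Set.range UD.u)) (hc0 : c ≠ 0)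
    (m : Fin θ → ℕ) (hm : ∀ i, m i < Dat.NN i)
    (r : H) (hr : r ∈ Submodule.span k
      {z : H | ∃ (gg : Γ) (n : Fin θ → ℕ),
        (∀ i, n i < Dat.NN i) ∧ GrlexLT n m ∧ z = UD.u gg * UD.xpow n})
    (hy : y = c * UD.xpow m + r) :
    c ∈ A ∧
      ∀ kk : Fin θ, 0 < m kk →
        ∃ (β : Fin θ → k) (α : k),
          UD.x kk + (∑ l ∈ Finset.Ioi kk, β l • (UD.u (Dat.g kk * (Dat.g l)⁻¹) * UD.x l))
            + α • UD.u (Dat.g kk) ∈ A := by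
  obtain ⟨cg, rfl⟩ := (Submodule.mem_span_range_iff_exists_fun k).mp hc
  have hy' : y = ∑ g, cg g • (UD.u g * UD.xpow m) + r := by
    simp only [hy, Finset.sum_mul, smul_mul_assoc]
  have hslice : ∀ G t, sliceRight (UD.pbwCoeff G t) (Coalgebra.comul (R := k) y) ∈ A :=
    fun G t => sliceRight_mem (Subalgebra.toSubmodule A) _ (hA y hyA)
  have hparts : ∀ G, cg G • UD.u G ∈ A := fun G =>
    UD.sliceRight_comul_leading_add_lower G hm cg hr ▸ hy' ▸ hslice G m
  refine ⟨sum_mem fun G _ => hparts G, fun i hi => ?_⟩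
  obtain ⟨g₀, hg₀⟩ : ∃ g₀, cg g₀ ≠ 0 := by
    by_contra! h
    exact hc0 (by simp [h])
  have hu : UD.u g₀⁻¹ ∈ A := UD.u.map_inv_mem_of_map_mem (by
    simpa [smul_smul, inv_mul_cancel₀ hg₀] using A.smul_mem (hparts g₀) (cg g₀)⁻¹)
  obtain ⟨t, rfl⟩ : ∃ t, m = t + Pi.single i 1 :=
    ⟨m - Pi.single i 1, (tsub_add_cancel_of_le (single_le_of_pos hi)).symm⟩
  exact UD.exists_tail_mem_of_sub_smul_mem_tailSpan hu
    (mul_ne_zero hg₀ (Dat.comulCoeff_ne_zero hi (hm i))) (hslice _ t)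
    (hy' ▸ UD.sliceRight_comul_leading_add_lower_sub_mem_tailSpan g₀ hm cg hr)

/-- **Theorem.** Let `A` be a right coideal subalgebra of `U(D)` and let `y ∈ A` be nonzero
with leading coefficient `c ∈ kΓ` and degree `m`, i.e. `y = c·x^m + r` where `r` is a linear
combination of monomials `u_g x^n` with `n` strictly smaller than `m` in the graded
lexicographic order. Then (a) `c ∈ A`, and (b) for every index `k` with `m_k > 0` there are
scalars `β_{k+1}, …, β_θ, α ∈ k` such that
`x_k + Σ_{ℓ>k} β_ℓ u_{g_k} u_{g_ℓ}⁻¹ x_ℓ + α u_{g_k} ∈ A`. -/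
theorem leading_coefficient_in_coideal_subalgebra
    {k : Type*} [Field k] [IsAlgClosed k] [CharZero k]
    {Γ : Type*} [CommGroup Γ] [Fintype Γ] {θ : ℕ} {Dat : LiftingDatum k Γ θ}
    {H : Type*} [Ring H] [HopfAlgebra k H] (UD : UDData k Γ θ Dat H)
    (A : Subalgebra k H) (hA : IsRightCoidealSubalgebra k A)
    (y : H) (hyA : y ∈ A) (hy0 : y ≠ 0)
    (c : H) (hc : c ∈ Submodule.span k (Set.range UD.u)) (hc0 : c ≠ 0)
    (m : Fin θ → ℕ) (hm : ∀ i, m i < Dat.NN i)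
    (r : H) (hr : r ∈ Submodule.span k
      {z : H | ∃ (gg : Γ) (n : Fin θ → ℕ),
        (∀ i, n i < Dat.NN i) ∧ GrlexLT n m ∧ z = UD.u gg * UD.xpow n})
    (hy : y = c * UD.xpow m + r) :
    c ∈ A ∧
      ∀ kk : Fin θ, 0 < m kk →
        ∃ (β : Fin θ → k) (α : k),
          UD.x kk + (∑ l ∈ Finset.Ioi kk, β l • (UD.u (Dat.g kk * (Dat.g l)⁻¹) * UD.x l))
            + α • UD.u (Dat.g kk) ∈ A :=
  leading_coefficient_in_coideal_subalgebra_general UD A hA y hyA c hc hc0 m hm r hr hy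
end
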